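/- For |q|<1, $\sum_{i,j\geq 0} \frac{q^{i^2+ij+\frac{1}{2}j^2 - i + \frac{1}{2}j}}{(q;q)_i (q;q)_j} = 2\,\frac{(q^4;q^4)_\infty}{(q;q)_\infty}$. Equivalently, replacing $q$ by $q^2$: $\sum_{i,j\geq 0} \frac{q^{2i^2+2ij+j^2-2i+j}}{(q^2;q^2)_i (q^2;q^2)_j} = 2\,\frac{(q^8;q^8)_\infty}{(q^2;q^2)_\infty}$. -/

import Mathlib

/-!
Put $x = q^2$ and write the summand as
$\frac{x^{2\binom i2}}{(x;x)_i}\cdot\frac{(x^{i+1})^j x^{\binom j2}}{(x;x)_j}$.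
By Euler's identity $\sum_j z^j x^{\binom j2}/(x;x)_j = (-z;x)_\infty$ the sum over $j$ is
$(-x^{i+1};x)_\infty = (-x;x)_\infty/(-x;x)_i$, and $(x;x)_i(-x;x)_i = (x^2;x^2)_i$ turns the
remaining sum over $i$ into Euler's identity in base $x^2$ at $z = 1$, i.e. $2(-x^2;x^2)_\infty$.
Finally $(-y;y)_\infty(y;y)_\infty = (y^2;y^2)_\infty$ for $y = x, x^2$ gives the quotient of
products. Euler's identity itself follows from $f(z) = (1+z)f(zx)$ for the series $f$, iterated
$N$ times, with $f(zx^N) \to f(0) = 1$ by dominated convergence.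
-/

open Finset Filter Topology

section CommRing

variable {R : Type*} [CommRing R]

/-- `qPochhammer x n` is $(x;x)_n$. -/
def qPochhammer (x : R) (n : ℕ) : R := ∏ k ∈ range n, (1 - x ^ (k + 1))

@[simp]
theorem qPochhammer_zero (x : R) : qPochhammer x 0 = 1 := prod_range_zero _

theorem qPochhammer_succ (x : R) (n : ℕ) :
    qPochhammer x (n + 1) = qPochhammer x n * (1 - x ^ (n + 1)) :=
  prod_range_succ _ _

theorem qPochhammer_mul_prod_one_add_pow (x : R) (n : ℕ) :
    qPochhammer x n * ∏ k ∈ range n, (1 + x ^ (k + 1)) = qPochhammer (x ^ 2) n := by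
  rw [qPochhammer, qPochhammer, ← prod_mul_distrib]
  exact prod_congr rfl fun k _ => by ring

end CommRing

section NormedField

variable {𝕜 : Type*} [NormedField 𝕜] {x : 𝕜}

theorem norm_pow_lt_one (hx : ‖x‖ < 1) {n : ℕ} (hn : n ≠ 0) : ‖x ^ n‖ < 1 := by
  rw [norm_pow]
  exact pow_lt_one₀ (norm_nonneg x) hx hn

theorem one_sub_pow_succ_ne_zero (hx : ‖x‖ < 1) (k : ℕ) : 1 - x ^ (k + 1) ≠ 0 := fun h =>
  (norm_pow_lt_one hx k.succ_ne_zero).ne (by rw [← sub_eq_zero.mp h, norm_one])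

theorem qPochhammer_ne_zero (hx : ‖x‖ < 1) (n : ℕ) : qPochhammer x n ≠ 0 :=
  prod_ne_zero_iff.mpr fun k _ => one_sub_pow_succ_ne_zero hx k

/-- The `n`-th term $z^n x^{\binom n2}/(x;x)_n$ of Euler's series for $(-z;x)_\infty$. -/
noncomputable def eulerTerm (x z : 𝕜) (n : ℕ) : 𝕜 := z ^ n * x ^ n.choose 2 / qPochhammer x n

@[simp]
theorem eulerTerm_zero (x z : 𝕜) : eulerTerm x z 0 = 1 := by simp [eulerTerm]

theorem eulerTerm_succ (hx : ‖x‖ < 1) (z : 𝕜) (n : ℕ) :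
    eulerTerm x z (n + 1) = z * x ^ n / (1 - x ^ (n + 1)) * eulerTerm x z n := by
  have := one_sub_pow_succ_ne_zero hx n
  have := qPochhammer_ne_zero hx n
  simp only [eulerTerm, qPochhammer_succ, Nat.choose_succ_succ', Nat.choose_one_right]
  field_simp
  ring

theorem eulerTerm_succ_eq_add (hx : ‖x‖ < 1) (z : 𝕜) (n : ℕ) :
    eulerTerm x z (n + 1) = eulerTerm x (z * x) (n + 1) + z * eulerTerm x (z * x) n := by
  have := one_sub_pow_succ_ne_zero hx n
  have := qPochhammer_ne_zero hx n
  simp only [eulerTerm, qPochhammer_succ, Nat.choose_succ_succ', Nat.choose_one_right]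
  field_simp
  ring

theorem norm_eulerTerm_le {w z : 𝕜} (h : ‖w‖ ≤ ‖z‖) (n : ℕ) :
    ‖eulerTerm x w n‖ ≤ ‖eulerTerm x z n‖ := by
  simp only [eulerTerm, norm_div, norm_mul, norm_pow]
  gcongr

theorem summable_norm_eulerTerm (hx : ‖x‖ < 1) (z : 𝕜) : Summable (‖eulerTerm x z ·‖) := by
  have hx' : Tendsto (fun n : ℕ => x ^ n) atTop (𝓝 0) :=
    tendsto_pow_atTop_nhds_zero_of_norm_lt_one hx
  have hratio : Tendsto (fun n : ℕ => z * x ^ n / (1 - x ^ (n + 1))) atTop (𝓝 0) := by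
    have hden : Tendsto (fun n : ℕ => 1 - x ^ (n + 1)) atTop (𝓝 1) := by
      simpa using tendsto_const_nhds.sub (hx'.comp (tendsto_add_atTop_nat 1))
    simpa [Pi.div_def] using (hx'.const_mul z).div hden one_ne_zero
  refine summable_of_ratio_norm_eventually_le (r := 1 / 2) (by norm_num) ?_
  filter_upwards [hratio.norm.eventually_le_const (by norm_num : ‖(0 : 𝕜)‖ < 1 / 2)] with n hn
  rw [norm_norm, norm_norm, eulerTerm_succ hx, norm_mul]
  gcongr

theorem continuous_eulerTerm (x : 𝕜) (n : ℕ) : Continuous fun z => eulerTerm x z n := by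
  unfold eulerTerm
  fun_prop

theorem tsum_eulerTerm_zero (x : 𝕜) : ∑' n, eulerTerm x 0 n = 1 := by
  rw [tsum_eq_single 0 fun n hn => by simp [eulerTerm, hn], eulerTerm_zero]

variable [CompleteSpace 𝕜]

theorem tsum_eulerTerm_eq_one_add_mul (hx : ‖x‖ < 1) (z : 𝕜) :
    ∑' n, eulerTerm x z n = (1 + z) * ∑' n, eulerTerm x (z * x) n := by
  have hs := (summable_norm_eulerTerm hx (z * x)).of_norm
  rw [(summable_norm_eulerTerm hx z).of_norm.tsum_eq_zero_add, eulerTerm_zero,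
    tsum_congr (eulerTerm_succ_eq_add hx z),
    ((summable_nat_add_iff 1).mpr hs).tsum_add (hs.mul_left z), tsum_mul_left,
    hs.tsum_eq_zero_add, eulerTerm_zero]
  ring

theorem tsum_eulerTerm_eq_prod_mul (hx : ‖x‖ < 1) (z : 𝕜) (N : ℕ) :
    ∑' n, eulerTerm x z n =
      (∏ k ∈ range N, (1 + z * x ^ k)) * ∑' n, eulerTerm x (z * x ^ N) n := by
  induction N with
  | zero => simp
  | succ N ih =>
    rw [ih, tsum_eulerTerm_eq_one_add_mul hx, prod_range_succ, pow_succ, mul_assoc z]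
    ring

theorem tendsto_tsum_eulerTerm_mul_pow (hx : ‖x‖ < 1) (z : 𝕜) :
    Tendsto (fun N => ∑' n, eulerTerm x (z * x ^ N) n) atTop (𝓝 1) := by
  have hlim : Tendsto (fun N => z * x ^ N) atTop (𝓝 0) := by
    simpa using (tendsto_pow_atTop_nhds_zero_of_norm_lt_one hx).const_mul z
  have hle : ∀ N, ‖z * x ^ N‖ ≤ ‖z‖ := fun N => by
    rw [norm_mul, norm_pow]
    exact mul_le_of_le_one_right (norm_nonneg z) (pow_le_one₀ (norm_nonneg x) hx.le)
  rw [← tsum_eulerTerm_zero x]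
  exact tendsto_tsum_of_dominated_convergence (summable_norm_eulerTerm hx z)
    (fun n => ((continuous_eulerTerm x n).tendsto 0).comp hlim)
    (Eventually.of_forall fun N n => norm_eulerTerm_le (hle N) n)

theorem multipliable_one_add_mul_pow (hx : ‖x‖ < 1) (z : 𝕜) :
    Multipliable fun k : ℕ => 1 + z * x ^ k :=
  multipliable_one_add_of_summable <| by
    simpa [norm_pow] using (summable_geometric_of_lt_one (norm_nonneg x) hx).mul_left ‖z‖

theorem hasSum_eulerTerm (hx : ‖x‖ < 1) (z : 𝕜) :
    HasSum (eulerTerm x z) (∏' k, (1 + z * x ^ k)) := by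
  have hlim := (multipliable_one_add_mul_pow hx z).hasProd.tendsto_prod_nat.mul
    (tendsto_tsum_eulerTerm_mul_pow hx z)
  simp_rw [← tsum_eulerTerm_eq_prod_mul hx z, mul_one] at hlim
  exact tendsto_const_nhds_iff.mp hlim ▸ (summable_norm_eulerTerm hx z).of_norm.hasSum

theorem multipliable_one_add_pow_succ (hx : ‖x‖ < 1) :
    Multipliable fun k : ℕ => 1 + x ^ (k + 1) :=
  (multipliable_one_add_mul_pow hx x).congr fun k => by rw [pow_succ']

theorem multipliable_one_sub_pow_succ (hx : ‖x‖ < 1) :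
    Multipliable fun k : ℕ => 1 - x ^ (k + 1) :=
  (multipliable_one_add_mul_pow hx (-x)).congr fun k => by rw [pow_succ', neg_mul, sub_eq_add_neg]

theorem tprod_one_sub_pow_succ_ne_zero (hx : ‖x‖ < 1) : ∏' k : ℕ, (1 - x ^ (k + 1)) ≠ 0 := by
  simp_rw [sub_eq_add_neg]
  refine tprod_one_add_ne_zero_of_summable (fun k => ?_) ?_
  · rw [← sub_eq_add_neg]
    exact one_sub_pow_succ_ne_zero hx k
  · simpa [norm_pow, pow_succ] using
      (summable_geometric_of_lt_one (norm_nonneg x) hx).mul_right ‖x‖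

theorem tprod_one_add_pow_succ_mul_tprod_one_sub_pow_succ (hx : ‖x‖ < 1) :
    (∏' k : ℕ, (1 + x ^ (k + 1))) * ∏' k : ℕ, (1 - x ^ (k + 1)) =
      ∏' k : ℕ, (1 - (x ^ 2) ^ (k + 1)) := by
  rw [← (multipliable_one_add_pow_succ hx).tprod_mul (multipliable_one_sub_pow_succ hx)]
  exact tprod_congr fun k => by ring

theorem prod_range_mul_tprod_one_add_pow_mul (hx : ‖x‖ < 1) (i : ℕ) :
    (∏ k ∈ range i, (1 + x ^ (k + 1))) * ∏' k : ℕ, (1 + x ^ (i + 1) * x ^ k) =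
      ∏' k : ℕ, (1 + x ^ (k + 1)) := by
  have hshift : Multipliable fun k : ℕ => 1 + x ^ (k + i + 1) :=
    (multipliable_one_add_mul_pow hx (x ^ (i + 1))).congr fun k => by ring
  rw [← hshift.prod_mul_tprod_nat_mul' (f := fun k => 1 + x ^ (k + 1))]
  exact congrArg _ (tprod_congr fun k => by ring)

theorem tprod_one_add_pow (hx : ‖x‖ < 1) :
    ∏' k : ℕ, (1 + x ^ k) = 2 * ∏' k : ℕ, (1 + x ^ (k + 1)) := by
  rw [tprod_eq_zero_mul' (f := fun k => 1 + x ^ k) (multipliable_one_add_pow_succ hx)]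
  norm_num

theorem hasSum_pow_choose_two_div_mul_eulerTerm (hx : ‖x‖ < 1) (i : ℕ) :
    HasSum (fun j => (x ^ 2) ^ i.choose 2 / qPochhammer x i * eulerTerm x (x ^ (i + 1)) j)
      (eulerTerm (x ^ 2) 1 i * ∏' k : ℕ, (1 + x ^ (k + 1))) := by
  have hx2 : ‖x ^ 2‖ < 1 := norm_pow_lt_one hx two_ne_zero
  have hB : ∏ k ∈ range i, (1 + x ^ (k + 1)) ≠ 0 := by
    have := qPochhammer_ne_zero hx2 i
    rw [← qPochhammer_mul_prod_one_add_pow] at this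
    exact right_ne_zero_of_mul this
  rw [← prod_range_mul_tprod_one_add_pow_mul hx i, eulerTerm, ← qPochhammer_mul_prod_one_add_pow,
    one_pow, one_mul, ← mul_assoc, div_mul_eq_mul_div, mul_div_mul_right _ _ hB]
  exact (hasSum_eulerTerm hx _).mul_left _

theorem tsum_pow_div_qPochhammer_mul_qPochhammer (hx : ‖x‖ < 1) :
    ∑' p : ℕ × ℕ, x ^ (2 * p.1.choose 2 + (p.1 + 1) * p.2 + p.2.choose 2) /
        (qPochhammer x p.1 * qPochhammer x p.2) =
      2 * (∏' k : ℕ, (1 - (x ^ 4) ^ (k + 1))) / ∏' k : ℕ, (1 - x ^ (k + 1)) := by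
  have hx2 : ‖x ^ 2‖ < 1 := norm_pow_lt_one hx two_ne_zero
  set a : ℕ → 𝕜 := fun i => (x ^ 2) ^ i.choose 2 / qPochhammer x i
  have hterm (i j : ℕ) : x ^ (2 * i.choose 2 + (i + 1) * j + j.choose 2) /
      (qPochhammer x i * qPochhammer x j) = a i * eulerTerm x (x ^ (i + 1)) j := by
    simp only [a, eulerTerm, pow_add, pow_mul, div_mul_div_comm]
    ring
  have hsummable : Summable fun p : ℕ × ℕ => a p.1 * eulerTerm x (x ^ (p.1 + 1)) p.2 := by
    refine Summable.of_norm_bounded ((summable_norm_eulerTerm hx 1).mul_of_nonneg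
      (summable_norm_eulerTerm hx x) (fun _ => norm_nonneg _) (fun _ => norm_nonneg _))
      fun ⟨i, j⟩ => ?_
    rw [norm_mul]
    gcongr
    · simp only [a, eulerTerm, norm_div, norm_pow, one_pow, one_mul]
      gcongr
      exact pow_le_of_le_one (norm_nonneg x) hx.le two_ne_zero
    · refine norm_eulerTerm_le ?_ _
      rw [norm_pow]
      exact pow_le_of_le_one (norm_nonneg x) hx.le i.succ_ne_zero
  rw [tsum_congr fun p : ℕ × ℕ => hterm p.1 p.2,
    hsummable.tsum_prod' fun i => (hasSum_pow_choose_two_div_mul_eulerTerm hx i).summable,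
    tsum_congr fun i => (hasSum_pow_choose_two_div_mul_eulerTerm hx i).tsum_eq, tsum_mul_right,
    (hasSum_eulerTerm hx2 1).tsum_eq, eq_div_iff (tprod_one_sub_pow_succ_ne_zero hx)]
  simp only [one_mul]
  rw [tprod_one_add_pow hx2, show x ^ 4 = (x ^ 2) ^ 2 by ring,
    ← tprod_one_add_pow_succ_mul_tprod_one_sub_pow_succ hx2,
    ← tprod_one_add_pow_succ_mul_tprod_one_sub_pow_succ hx]
  ring

end NormedField

theorem toNat_exponent_eq (i j : ℕ) :
    (2 * (i : ℤ) ^ 2 + 2 * i * j + (j : ℤ) ^ 2 - 2 * i + j).toNat =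
      2 * (2 * i.choose 2 + (i + 1) * j + j.choose 2) := by
  have hℚ : ((2 * (2 * i.choose 2 + (i + 1) * j + j.choose 2) : ℕ) : ℚ) =
      2 * (i : ℚ) ^ 2 + 2 * i * j + (j : ℚ) ^ 2 - 2 * i + j := by
    push_cast [Nat.cast_choose_two]
    ring
  have hℤ : ((2 * (2 * i.choose 2 + (i + 1) * j + j.choose 2) : ℕ) : ℤ) =
      2 * (i : ℤ) ^ 2 + 2 * i * j + (j : ℤ) ^ 2 - 2 * i + j := by
    exact_mod_cast hℚ
  rw [← hℤ, Int.toNat_natCast]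

/-- Example 2, first case (after replacing q by q²). -/
theorem example2_case1 (q : ℂ) (hq : ‖q‖ < 1) :
    ∑' p : ℕ × ℕ,
      q ^ ((2 * (p.1 : ℤ) ^ 2 + 2 * p.1 * p.2 + (p.2 : ℤ) ^ 2 - 2 * p.1 + p.2).toNat) /
        ((∏ k ∈ Finset.range p.1, (1 - q ^ (2 * (k + 1)))) *
          ∏ k ∈ Finset.range p.2, (1 - q ^ (2 * (k + 1)))) =
    2 * (∏' k : ℕ, (1 - q ^ (8 * (k + 1)))) / ∏' k : ℕ, (1 - q ^ (2 * (k + 1))) := by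
  simp_rw [toNat_exponent_eq, pow_mul, show q ^ 8 = (q ^ 2) ^ 4 by ring]
  exact tsum_pow_div_qPochhammer_mul_qPochhammer (norm_pow_lt_one hq two_ne_zero)
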